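/- arXiv:2209.02531 — 4 statements merged into one kernel-verified Lean document; each statement's English description precedes it below -/
import Mathlib

section
/- Let d ≥ 1, ν₀ > 0, ν₁ ≥ 0, and r ≥ 2. Define A(Q) = (ν₀ + ν₁|Q|)^{r−2} Q for d×d real matrices Q. Then there exists a constant c > 0, depending only on ν₀, ν₁ and r, such that for all d×d real matrices Q and P one has ⟨A(Q) − A(P), Q − P⟩ ≥ c·|Q − P|², where ⟨·,·⟩ denotes the Frobenius inner product Σ_{i,j} M_{ij} N_{ij}. -/
open scoped BigOperators

/-- Frobenius (Euclidean) norm of a `d × d` real matrix. -/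
noncomputable def frobNorm {d : ℕ} (Q : Matrix (Fin d) (Fin d) ℝ) : ℝ :=
  Real.sqrt (∑ i, ∑ j, (Q i j) ^ 2)

/-- The power-law stress tensor `A(Q) = (ν₀ + ν₁ |Q|)^(r-2) Q` (real exponent). -/
noncomputable def powerLawA {d : ℕ} (ν₀ ν₁ r : ℝ) (Q : Matrix (Fin d) (Fin d) ℝ) :
    Matrix (Fin d) (Fin d) ℝ :=
  ((ν₀ + ν₁ * frobNorm Q) ^ (r - 2)) • Q

lemma frobNorm_nonneg {d : ℕ} (Q : Matrix (Fin d) (Fin d) ℝ) : 0 ≤ frobNorm Q :=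
  Real.sqrt_nonneg _

lemma frobNorm_sq {d : ℕ} (Q : Matrix (Fin d) (Fin d) ℝ) :
    frobNorm Q ^ 2 = ∑ i, ∑ j, Q i j * Q i j := by
  rw [frobNorm, Real.sq_sqrt (by positivity)]
  simp [sq]

/-- Cauchy–Schwarz for the Frobenius inner product. -/
lemma frob_cauchy {d : ℕ} (Q P : Matrix (Fin d) (Fin d) ℝ) :
    ∑ i, ∑ j, Q i j * P i j ≤ frobNorm Q * frobNorm P := by
  have h := Real.sum_mul_le_sqrt_mul_sqrt (Finset.univ (α := Fin d × Fin d))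
      (fun p => Q p.1 p.2) (fun p => P p.1 p.2)
  simpa [Fintype.sum_prod_type, frobNorm] using h

lemma key_ineq (c ga gb a b T : ℝ) (hcgb : c ≤ gb)
    (hba : b ≤ a) (hgba : gb ≤ ga) (hb : 0 ≤ b) (hT : T ≤ a * b) :
    c * (a ^ 2 - 2 * T + b ^ 2) ≤ ga * a ^ 2 + gb * b ^ 2 - (ga + gb) * T := by
  nlinarith [mul_nonneg (sub_nonneg.2 hgba) (mul_nonneg (hb.trans hba) (sub_nonneg.2 hba)),
    sq_nonneg (a - b), mul_nonneg (sub_nonneg.2 hcgb) (sq_nonneg (a - b)),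
    mul_nonneg (sub_nonneg.2 hcgb) (sub_nonneg.2 hT)]

/-- Strong monotonicity of the power-law tensor for `r ≥ 2`, `ν₀ > 0`:
`⟨A(Q) − A(P), Q − P⟩ ≥ c |Q − P|²` (Frobenius inner product), with `c > 0`
depending only on `ν₀`, `ν₁` and `r`. -/
theorem powerLawA_strong_monotonicity (ν₀ ν₁ r : ℝ) (hν₀ : 0 < ν₀) (hν₁ : 0 ≤ ν₁)
    (hr : 2 ≤ r) :
    ∃ c : ℝ, 0 < c ∧ ∀ (d : ℕ), 1 ≤ d → ∀ Q P : Matrix (Fin d) (Fin d) ℝ,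
      c * frobNorm (Q - P) ^ 2
        ≤ ∑ i, ∑ j,
            (powerLawA ν₀ ν₁ r Q - powerLawA ν₀ ν₁ r P) i j * (Q - P) i j := by
  refine ⟨ν₀ ^ (r - 2), Real.rpow_pos_of_pos hν₀ _, fun d _ Q P => ?_⟩
  set c : ℝ := ν₀ ^ (r - 2) with hc
  set a : ℝ := frobNorm Q with ha
  set b : ℝ := frobNorm P with hb
  set ga : ℝ := (ν₀ + ν₁ * a) ^ (r - 2) with hga
  set gb : ℝ := (ν₀ + ν₁ * b) ^ (r - 2) with hgb
  have hr2 : (0:ℝ) ≤ r - 2 := by linarith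
  have hanon : 0 ≤ a := frobNorm_nonneg Q
  have hbnon : 0 ≤ b := frobNorm_nonneg P
  have hcga : c ≤ ga := Real.rpow_le_rpow hν₀.le (by nlinarith) hr2
  have hcgb : c ≤ gb := Real.rpow_le_rpow hν₀.le (by nlinarith) hr2
  set T : ℝ := ∑ i, ∑ j, Q i j * P i j with hT
  have hTle : T ≤ a * b := frob_cauchy Q P
  have hQ2 : a ^ 2 = ∑ i, ∑ j, Q i j * Q i j := frobNorm_sq Q
  have hP2 : b ^ 2 = ∑ i, ∑ j, P i j * P i j := frobNorm_sq P
  have hRHS : (∑ i, ∑ j, (powerLawA ν₀ ν₁ r Q - powerLawA ν₀ ν₁ r P) i j * (Q - P) i j)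
      = ga * a ^ 2 + gb * b ^ 2 - (ga + gb) * T := by
    have hpt : ∀ i j, (powerLawA ν₀ ν₁ r Q - powerLawA ν₀ ν₁ r P) i j * (Q - P) i j
        = ga * (Q i j * Q i j) + gb * (P i j * P i j)
          - (ga + gb) * (Q i j * P i j) := by
      intro i j
      simp only [powerLawA, Matrix.sub_apply, Matrix.smul_apply, smul_eq_mul, ← hga, ← hgb,
        ← ha, ← hb]
      ring
    simp_rw [hpt, Finset.sum_sub_distrib, Finset.sum_add_distrib, ← Finset.mul_sum]
    rw [← hQ2, ← hP2, ← hT]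
  have hLHS : frobNorm (Q - P) ^ 2 = a ^ 2 - 2 * T + b ^ 2 := by
    rw [frobNorm_sq]
    have hpt : ∀ i j, (Q - P) i j * (Q - P) i j
        = Q i j * Q i j - 2 * (Q i j * P i j) + P i j * P i j := by
      intro i j; simp only [Matrix.sub_apply]; ring
    simp_rw [hpt, Finset.sum_add_distrib, Finset.sum_sub_distrib, ← Finset.mul_sum]
    rw [← hQ2, ← hP2, ← hT]
  rw [hRHS, hLHS]
  rcases le_total b a with h | h
  · exact key_ineq c ga gb a b T hcgb h
      (Real.rpow_le_rpow (by positivity) (by nlinarith) hr2) hbnon hTle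
  · have := key_ineq c gb ga b a T hcga h
      (Real.rpow_le_rpow (by positivity) (by nlinarith) hr2) hanon
      (by rw [mul_comm]; exact hTle)
    linarith
end

section
/- Let d ≥ 2. There exists a finite set Λ of unit vectors in ℝ^d, each having all coordinates rational, and for each ξ ∈ Λ a function γ_ξ from symmetric d×d real matrices to ℝ which is C^∞ (infinitely differentiable) on the closed ball B̄_{1/2}(Id) = {R symmetric : |R − Id| ≤ 1/2}, such that for every symmetric d×d matrix R with |R − Id| ≤ 1/2 one has R = Σ_{ξ∈Λ} γ_ξ(R)² (ξ ⊗ ξ), where ξ ⊗ ξ denotes the rank-one matrix with entries ξ_i ξ_j and |·| on matrices is the Frobenius norm. -/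
open scoped BigOperators

attribute [local instance] Matrix.normedAddCommGroup Matrix.normedSpace

/-!
Near a symmetric `R₀ ≥ c • 1`, approximate `R₀ - c • 1 = ∑ₘ xₘ ⊗ xₘ` by `∑ₘ λₘ wₘ ⊗ wₘ` with
rational unit vectors `wₘ` (rational points are dense on the sphere: Householder reflections of
rational vectors are rational). The remainder, a matrix close to `c • 1`, is decomposed exactly
over the fixed rational family `eᵢ`, `(3eᵢ ± 4eⱼ)/5`, with coefficients affine in the matrix and
positive near `c • 1`. By compactness finitely many such patches suffice; giving, in each patch,
a small weight `η > 0` to the vectors of all the other patches makes every coefficient positive.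
Positivity of the coefficients and the decomposition identity are convex conditions, so a
smooth partition of unity glues the patches, and `γ_ξ` is the square root of the total
coefficient of `ξ`.
-/

open Matrix Set Metric
open scoped ContDiff Manifold

namespace GeometricLemma

variable {d : ℕ}

lemma frobNorm_nonneg (A : Matrix (Fin d) (Fin d) ℝ) : 0 ≤ frobNorm A :=
  Real.sqrt_nonneg _

lemma continuous_frobNorm : Continuous (frobNorm : Matrix (Fin d) (Fin d) ℝ → ℝ) := by
  unfold frobNorm
  fun_prop

lemma norm_le_frobNorm (A : Matrix (Fin d) (Fin d) ℝ) : ‖A‖ ≤ frobNorm A := by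
  refine (norm_le_iff (frobNorm_nonneg A)).2 fun i j => Real.abs_le_sqrt ?_
  calc A i j ^ 2 ≤ ∑ l, A i l ^ 2 :=
        Finset.single_le_sum (fun l _ => sq_nonneg (A i l)) (Finset.mem_univ j)
    _ ≤ ∑ k, ∑ l, A k l ^ 2 :=
        Finset.single_le_sum (f := fun k => ∑ l, A k l ^ 2)
          (fun k _ => Finset.sum_nonneg fun l _ => sq_nonneg _) (Finset.mem_univ i)

lemma abs_dotProduct_mulVec_le (A : Matrix (Fin d) (Fin d) ℝ) (x : Fin d → ℝ) :
    |x ⬝ᵥ A *ᵥ x| ≤ frobNorm A * (x ⬝ᵥ x) := by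
  have hq : x ⬝ᵥ A *ᵥ x = ∑ p : Fin d × Fin d, A p.1 p.2 * (x p.1 * x p.2) := by
    simp only [dotProduct, mulVec, Fintype.sum_prod_type, Finset.mul_sum]
    exact Finset.sum_congr rfl fun i _ => Finset.sum_congr rfl fun j _ => by ring
  have hx : ∑ p : Fin d × Fin d, (x p.1 * x p.2) ^ 2 = (x ⬝ᵥ x) ^ 2 := by
    simp only [dotProduct, Fintype.sum_prod_type, sq, Finset.sum_mul_sum]
    exact Finset.sum_congr rfl fun i _ => Finset.sum_congr rfl fun j _ => by ring
  have hA : ∑ p : Fin d × Fin d, A p.1 p.2 ^ 2 = ∑ i, ∑ j, A i j ^ 2 := Fintype.sum_prod_type _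
  have hxx : 0 ≤ x ⬝ᵥ x := dotProduct_self_star_nonneg x
  rw [frobNorm, ← Real.sqrt_sq hxx, ← Real.sqrt_mul, hq]
  · exact Real.abs_le_sqrt ((Finset.sum_mul_sq_le_sq_mul_sq _ _ _).trans_eq (by rw [hA, hx]))
  · exact Finset.sum_nonneg fun i _ => Finset.sum_nonneg fun j _ => sq_nonneg _

lemma posSemidef_sub_smul_one_of_frobNorm_sub_one_le {R : Matrix (Fin d) (Fin d) ℝ}
    (hR : R.IsSymm) {r : ℝ} (h : frobNorm (R - 1) ≤ r) : (R - (1 - r) • 1).PosSemidef := by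
  refine posSemidef_iff_dotProduct_mulVec.2 ⟨?_, fun x => ?_⟩
  · simpa [IsHermitian, IsSymm, transpose_sub] using hR
  · have hx : 0 ≤ x ⬝ᵥ x := dotProduct_self_star_nonneg x
    have hq := (abs_le.1 ((abs_dotProduct_mulVec_le (R - 1) x).trans
      (mul_le_mul_of_nonneg_right h hx))).1
    simp only [star_trivial, sub_mulVec, smul_mulVec, one_mulVec, dotProduct_sub,
      dotProduct_smul, smul_eq_mul] at hq ⊢
    nlinarith

lemma isCompact_setOf_isSymm_frobNorm_sub_one_le (r : ℝ) :
    IsCompact {R : Matrix (Fin d) (Fin d) ℝ | R.IsSymm ∧ frobNorm (R - 1) ≤ r} := by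
  refine (isCompact_closedBall (1 : Matrix (Fin d) (Fin d) ℝ) r).of_isClosed_subset ?_
    fun R hR => (norm_le_frobNorm _).trans hR.2
  exact (isClosed_eq continuous_id.matrix_transpose continuous_id).inter
    (isClosed_le (continuous_frobNorm.comp (continuous_id.sub continuous_const)) continuous_const)

def ratSphere (d : ℕ) : Set (Fin d → ℝ) :=
  {ξ | (∑ i, ξ i ^ 2 = 1) ∧ ∀ i, ∃ q : ℚ, ξ i = q}

lemma mem_ratSphere_iff {ξ : Fin d → ℝ} :
    ξ ∈ ratSphere d ↔ ξ ⬝ᵥ ξ = 1 ∧ ∀ i, ∃ q : ℚ, ξ i = q := by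
  simp [ratSphere, dotProduct, sq]

lemma single_mem_ratSphere (i : Fin d) : Pi.single i 1 ∈ ratSphere d := by
  refine ⟨by simp [Pi.single_apply], fun j => ⟨if j = i then 1 else 0, ?_⟩⟩
  by_cases h : j = i <;> simp [h]

section Householder

variable {ι : Type*} [Fintype ι]

/-- The reflection of `v` in the hyperplane `w⊥`; the identity when `w = 0`. -/
noncomputable def householder (w v : ι → ℝ) : ι → ℝ :=
  v - (2 * (w ⬝ᵥ v) / (w ⬝ᵥ w)) • w

lemma householder_dotProduct_self (w v : ι → ℝ) :
    householder w v ⬝ᵥ householder w v = v ⬝ᵥ v := by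
  by_cases hw : w ⬝ᵥ w = 0
  · simp [householder, hw]
  · simp only [householder, sub_dotProduct, dotProduct_sub, smul_dotProduct, dotProduct_smul,
      smul_eq_mul, dotProduct_comm v w]
    field_simp
    ring

lemma householder_sub_self {e v : ι → ℝ} (h : v ⬝ᵥ v = e ⬝ᵥ e) :
    householder (e - v) e = v := by
  have hw : (e - v) ⬝ᵥ (e - v) = 2 * ((e - v) ⬝ᵥ e) := by
    simp only [sub_dotProduct, dotProduct_sub, dotProduct_comm v e, h]
    ring
  by_cases h0 : (e - v) ⬝ᵥ e = 0
  · rw [h0, mul_zero, dotProduct_self_eq_zero, sub_eq_zero] at hw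
    simp [householder, hw]
  · rw [householder, hw, div_self (mul_ne_zero two_ne_zero h0), one_smul, sub_sub_cancel]

lemma householder_rat {w v : ι → ℝ} (hw : ∀ i, ∃ q : ℚ, w i = q)
    (hv : ∀ i, ∃ q : ℚ, v i = q) (i : ι) : ∃ q : ℚ, householder w v i = q := by
  choose qw hqw using hw
  choose qv hqv using hv
  exact ⟨qv i - 2 * (∑ j, qw j * qv j) / (∑ j, qw j * qw j) * qw i, by
    simp [householder, dotProduct, hqw, hqv]⟩

lemma continuousAt_householder {w : ι → ℝ} (hw : w ≠ 0) (v : ι → ℝ) :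
    ContinuousAt (householder · v) w := by
  have : w ⬝ᵥ w ≠ 0 := fun h => hw (dotProduct_self_eq_zero.1 h)
  unfold householder
  fun_prop (disch := exact this)

end Householder

lemma dense_setOf_forall_exists_rat {ι : Type*} : Dense {w : ι → ℝ | ∀ i, ∃ q : ℚ, w i = q} := by
  convert dense_pi univ fun (_ : ι) _ => Rat.denseRange_cast (𝕜 := ℝ) using 1
  ext w
  simp [eq_comm]

lemma mem_closure_ratSphere [NeZero d] {v : Fin d → ℝ} (hv : ∑ i, v i ^ 2 = 1) :
    v ∈ closure (ratSphere d) := by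
  set e : Fin d → ℝ := Pi.single 0 1
  have he := mem_ratSphere_iff.1 (single_mem_ratSphere (0 : Fin d))
  by_cases hve : v = e
  · exact hve ▸ subset_closure (single_mem_ratSphere 0)
  have hve' : v ⬝ᵥ v = e ⬝ᵥ e := by
    rw [he.1]
    simpa [dotProduct, sq] using hv
  have himage : (householder · e) '' {w | ∀ i, ∃ q : ℚ, w i = q} ⊆ ratSphere d := by
    rintro _ ⟨w, hw, rfl⟩
    exact mem_ratSphere_iff.2 ⟨by rw [householder_dotProduct_self, he.1], householder_rat hw he.2⟩
  have := mem_closure_image (continuousAt_householder (sub_ne_zero.2 (Ne.symm hve)) e)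
    (dense_setOf_forall_exists_rat (e - v))
  rw [householder_sub_self hve'] at this
  exact closure_mono himage this

lemma exists_ratSphere_near_vecMulVec [NeZero d] (x : Fin d → ℝ) {ε : ℝ} (hε : 0 < ε) :
    ∃ c : ℝ, 0 ≤ c ∧ ∃ ξ ∈ ratSphere d, ‖vecMulVec x x - c • vecMulVec ξ ξ‖ < ε := by
  by_cases hx : x = 0
  · exact ⟨0, le_rfl, _, single_mem_ratSphere 0, by simpa [hx] using hε⟩
  have hxx : 0 ≤ x ⬝ᵥ x := dotProduct_self_star_nonneg x
  set r := √(x ⬝ᵥ x)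
  have hr : 0 < r :=
    Real.sqrt_pos.2 (lt_of_le_of_ne hxx (Ne.symm fun h => hx (dotProduct_self_eq_zero.1 h)))
  have hunit : ∑ i, (r⁻¹ • x) i ^ 2 = 1 := by
    have : r ^ 2 = ∑ i, x i ^ 2 := by
      rw [Real.sq_sqrt hxx]
      simp [dotProduct, sq]
    simp only [Pi.smul_apply, smul_eq_mul, mul_pow, ← Finset.mul_sum, ← this]
    field_simp
  have hscale : vecMulVec x x = r ^ 2 • vecMulVec (r⁻¹ • x) (r⁻¹ • x) := by
    rw [smul_vecMulVec, vecMulVec_smul, smul_smul, smul_smul]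
    field_simp
    simp
  have hcont : Continuous fun ξ : Fin d → ℝ => r ^ 2 • vecMulVec ξ ξ := by fun_prop
  obtain ⟨_, ⟨ξ, hξ, rfl⟩, hdist⟩ := Metric.mem_closure_iff.1
    (mem_closure_image hcont.continuousAt (mem_closure_ratSphere hunit)) ε hε
  exact ⟨r ^ 2, by positivity, ξ, hξ, by rwa [hscale, ← dist_eq_norm]⟩

open scoped MatrixOrder in
lemma exists_ratSphere_approx_of_posSemidef [NeZero d] {P : Matrix (Fin d) (Fin d) ℝ}
    (hP : P.PosSemidef) {ε : ℝ} (hε : 0 < ε) :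
    ∃ (c : Fin d → ℝ) (w : Fin d → Fin d → ℝ), (∀ m, 0 ≤ c m) ∧ (∀ m, w m ∈ ratSphere d) ∧
      ‖P - ∑ m, c m • vecMulVec (w m) (w m)‖ < ε := by
  obtain ⟨B, rfl⟩ := CStarAlgebra.nonneg_iff_eq_star_mul_self.mp hP.nonneg
  have hB : star B * B = ∑ m, vecMulVec (B m) (B m) := by
    ext i j
    simp [mul_apply, Matrix.sum_apply, vecMulVec_apply]
  have hεd : 0 < ε / d := div_pos hε (by simp [NeZero.pos d])
  choose c hc w hw hcw using fun m => exists_ratSphere_near_vecMulVec (B m) hεd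
  refine ⟨c, w, hc, hw, ?_⟩
  calc ‖star B * B - ∑ m, c m • vecMulVec (w m) (w m)‖
      = ‖∑ m, (vecMulVec (B m) (B m) - c m • vecMulVec (w m) (w m))‖ := by
        rw [hB, Finset.sum_sub_distrib]
    _ ≤ ∑ m, ‖vecMulVec (B m) (B m) - c m • vecMulVec (w m) (w m)‖ := norm_sum_le _ _
    _ < ∑ _m : Fin d, ε / d :=
        Finset.sum_lt_sum_of_nonempty Finset.univ_nonempty fun m _ => hcw m
    _ = ε := by simp [mul_div_cancel₀ ε (NeZero.ne (d : ℝ))]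

def boolSign (b : Bool) : ℝ := if b then 1 else -1

lemma boolSign_sq (b : Bool) : boolSign b ^ 2 = 1 := by
  cases b <;> norm_num [boolSign]

noncomputable def pairVec (i j : Fin d) (b : Bool) : Fin d → ℝ :=
  (3 / 5 : ℝ) • Pi.single i 1 + (4 / 5 * boolSign b) • Pi.single j 1

lemma pairVec_mem_ratSphere {i j : Fin d} (hij : i ≠ j) (b : Bool) :
    pairVec i j b ∈ ratSphere d := by
  refine mem_ratSphere_iff.2 ⟨?_, fun k => ⟨3 / 5 * (if k = i then 1 else 0) +
    4 / 5 * (if b then 1 else -1) * (if k = j then 1 else 0), ?_⟩⟩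
  · simp only [pairVec, dotProduct_add, dotProduct_smul, dotProduct_single, Pi.add_apply,
      Pi.smul_apply, Pi.single_eq_same, Pi.single_eq_of_ne hij, Pi.single_eq_of_ne hij.symm,
      smul_eq_mul, mul_one, mul_zero, add_zero, zero_add]
    linear_combination (16 / 25 : ℝ) * boolSign_sq b
  · by_cases hi : k = i <;> by_cases hj : k = j <;> cases b <;> simp_all [pairVec, boolSign]

abbrev BaseIdx (d : ℕ) := Fin d ⊕ ({p : Fin d × Fin d // p.1 ≠ p.2} × Bool)

noncomputable def baseVec : BaseIdx d → Fin d → ℝ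
  | .inl i => Pi.single i 1
  | .inr (p, b) => pairVec p.1.1 p.1.2 b

lemma baseVec_mem_ratSphere : ∀ x : BaseIdx d, baseVec x ∈ ratSphere d
  | .inl i => single_mem_ratSphere i
  | .inr (p, b) => pairVec_mem_ratSphere p.2 b

noncomputable def pairCoeff (ρ : ℝ) (M : Matrix (Fin d) (Fin d) ℝ) (i j : Fin d) (b : Bool) : ℝ :=
  25 / 48 * (2 * ρ + boolSign b * M i j)

/-- For each `j ≠ i`, the pairs `(i, j)` and `(j, i)` together put `25/12 ρ` on the diagonal
entry `(i, i)` (see `sum_pairCoeff_smul_vecMulVec`); the coefficient of `eᵢ` compensates. -/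
noncomputable def baseCoeff (ρ : ℝ) (M : Matrix (Fin d) (Fin d) ℝ) : BaseIdx d → ℝ
  | .inl i => M i i - 25 / 12 * (d - 1) * ρ
  | .inr (p, b) => pairCoeff ρ M p.1.1 p.1.2 b

lemma contDiff_baseCoeff (ρ : ℝ) (x : BaseIdx d) : ContDiff ℝ ∞ fun M => baseCoeff ρ M x := by
  rcases x with i | ⟨p, b⟩
  · simp only [baseCoeff]
    fun_prop
  · simp only [baseCoeff, pairCoeff]
    fun_prop

lemma baseCoeff_pos {ρ c : ℝ} (hρ : 0 < ρ) (hρc : 25 * d * ρ ≤ 12 * c)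
    {M : Matrix (Fin d) (Fin d) ℝ} (hM : ‖M - c • 1‖ ≤ ρ) (x : BaseIdx d) :
    0 < baseCoeff ρ M x := by
  have hentry (i j : Fin d) : |(M - c • 1) i j| ≤ ρ :=
    (norm_entry_le_entrywise_sup_norm (M - c • 1)).trans hM
  rcases x with i | ⟨⟨⟨i, j⟩, hij⟩, b⟩
  · have := (abs_le.1 (hentry i i)).1
    simp only [Matrix.sub_apply, Matrix.smul_apply, one_apply_eq, smul_eq_mul, mul_one] at this
    simp only [baseCoeff]
    nlinarith
  · have := abs_le.1 (hentry i j)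
    simp only [Matrix.sub_apply, Matrix.smul_apply, one_apply_ne hij, smul_eq_mul, mul_zero,
      sub_zero] at this
    simp only [baseCoeff, pairCoeff, boolSign]
    split_ifs <;> nlinarith

lemma sum_pairCoeff_smul_vecMulVec (ρ : ℝ) (M : Matrix (Fin d) (Fin d) ℝ) (i j : Fin d) :
    ∑ b, pairCoeff ρ M i j b • vecMulVec (pairVec i j b) (pairVec i j b) =
      (3 / 4 * ρ) • single i i 1 + (4 / 3 * ρ) • single j j 1 +
        (M i j / 2) • (single i j 1 + single j i 1) := by
  simp only [Fintype.sum_bool, pairCoeff, pairVec, boolSign, if_true, Bool.false_eq_true,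
    if_false, add_vecMulVec, vecMulVec_add, smul_vecMulVec, vecMulVec_smul,
    ← single_eq_single_vecMulVec_single]
  module

lemma sum_offDiag_eq_sub {α M : Type*} [Fintype α] [DecidableEq α] [AddCommGroup M]
    (f : α → α → M) :
    ∑ p : {p : α × α // p.1 ≠ p.2}, f p.1.1 p.1.2 = ∑ i, ∑ j, f i j - ∑ i, f i i := by
  rw [← Finset.sum_subtype (Finset.univ.filter fun p : α × α => p.1 ≠ p.2) (by simp)
    (fun p => f p.1 p.2), Finset.sum_filter, Fintype.sum_prod_type, ← Finset.sum_sub_distrib]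
  refine Finset.sum_congr rfl fun i _ => ?_
  rw [eq_sub_iff_add_eq, Finset.sum_ite, Finset.sum_const_zero, add_zero]
  dsimp only
  rw [Finset.filter_ne, Finset.sum_erase_add _ _ (Finset.mem_univ i)]

lemma sum_baseCoeff_smul_vecMulVec (ρ : ℝ) {M : Matrix (Fin d) (Fin d) ℝ} (hM : M.IsSymm) :
    ∑ x, baseCoeff ρ M x • vecMulVec (baseVec x) (baseVec x) = M := by
  simp only [Fintype.sum_sum_type, Fintype.sum_prod_type, baseCoeff, baseVec,
    sum_pairCoeff_smul_vecMulVec, ← single_eq_single_vecMulVec_single]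
  rw [sum_offDiag_eq_sub (fun i j => (3 / 4 * ρ) • single i i (1 : ℝ) +
    (4 / 3 * ρ) • single j j 1 + (M i j / 2) • (single i j 1 + single j i 1))]
  ext k l
  by_cases h : k = l
  · subst h
    simp [Matrix.sum_apply, single_apply, Finset.sum_add_distrib, ite_and, -nsmul_eq_mul,
      Matrix.smul_apply]
    ring
  · simp [Matrix.sum_apply, single_apply, Finset.sum_add_distrib, ite_and, h,
      (hM.apply l k).symm, -nsmul_eq_mul, Matrix.smul_apply]

lemma isSymm_sum_smul_vecMulVec {κ n : Type*} [Fintype κ] (a : κ → ℝ) (u : κ → n → ℝ) :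
    (∑ k, a k • vecMulVec (u k) (u k)).IsSymm := by
  simp [IsSymm, transpose_sum, transpose_smul, transpose_vecMulVec]

noncomputable def patchCoeff {κ : Type*} [Fintype κ] (ρ : ℝ) (u : κ → Fin d → ℝ) (a : κ → ℝ)
    (R : Matrix (Fin d) (Fin d) ℝ) : BaseIdx d ⊕ κ → ℝ :=
  Sum.elim (baseCoeff ρ (R - ∑ k, a k • vecMulVec (u k) (u k))) a

section Patch

variable {κ : Type*} [Fintype κ] (u : κ → Fin d → ℝ)

lemma contDiff_patchCoeff (ρ : ℝ) (a : κ → ℝ) : ContDiff ℝ ∞ (patchCoeff ρ u a) := by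
  refine contDiff_pi.2 fun x => ?_
  rcases x with x | k
  · exact (contDiff_baseCoeff ρ x).comp (contDiff_id.sub contDiff_const)
  · exact contDiff_const

lemma patchCoeff_pos {ρ c : ℝ} (hρ : 0 < ρ) (hρc : 25 * d * ρ ≤ 12 * c) {a : κ → ℝ}
    (ha : ∀ k, 0 < a k) {R : Matrix (Fin d) (Fin d) ℝ}
    (hR : ‖R - ∑ k, a k • vecMulVec (u k) (u k) - c • 1‖ ≤ ρ) (x : BaseIdx d ⊕ κ) :
    0 < patchCoeff ρ u a R x := by
  rcases x with x | k
  · exact baseCoeff_pos hρ hρc hR x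
  · exact ha k

lemma sum_patchCoeff_smul_vecMulVec (ρ : ℝ) (a : κ → ℝ) {R : Matrix (Fin d) (Fin d) ℝ}
    (hR : R.IsSymm) :
    ∑ x, patchCoeff ρ u a R x • vecMulVec (Sum.elim baseVec u x) (Sum.elim baseVec u x) = R := by
  rw [Fintype.sum_sum_type]
  simp only [patchCoeff, Sum.elim_inl, Sum.elim_inr]
  rw [sum_baseCoeff_smul_vecMulVec ρ (hR.sub (isSymm_sum_smul_vecMulVec a u)), sub_add_cancel]

end Patch

lemma convex_setOf_pos_sum_smul_eq {ι F : Type*} [Fintype ι] [AddCommGroup F] [Module ℝ F]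
    (m : ι → F) (y : F) : Convex ℝ {C : ι → ℝ | (∀ i, 0 < C i) ∧ ∑ i, C i • m i = y} := by
  have : {C : ι → ℝ | (∀ i, 0 < C i) ∧ ∑ i, C i • m i = y} =
      (univ.pi fun _ => Ioi 0) ∩ Fintype.linearCombination ℝ m ⁻¹' {y} := by
    ext C
    simp [Fintype.linearCombination_apply]
  rw [this]
  exact (convex_pi fun i _ => convex_Ioi 0).inter
    ((convex_singleton y).linear_preimage (Fintype.linearCombination ℝ m))

theorem exists_contDiff_forall_mem_of_cover {E F τ : Type*} [NormedAddCommGroup E]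
    [NormedSpace ℝ E] [FiniteDimensional ℝ E] [NormedAddCommGroup F] [NormedSpace ℝ F]
    {K : Set E} (hK : IsClosed K) {t : E → Set F} (ht : ∀ x ∈ K, Convex ℝ (t x))
    (U : τ → Set E) (hU : ∀ k, IsOpen (U k)) (hKU : K ⊆ ⋃ k, U k)
    (g : τ → E → F) (hg : ∀ k, ContDiff ℝ ∞ (g k)) (hgt : ∀ k, ∀ x ∈ K ∩ U k, g k x ∈ t x) :
    ∃ G : E → F, ContDiff ℝ ∞ G ∧ ∀ x ∈ K, G x ∈ t x := by
  obtain ⟨G, hG⟩ := exists_contMDiffMap_forall_mem_convex_of_local (n := ⊤) 𝓘(ℝ, E)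
    (t := fun x => {y | x ∈ K → y ∈ t x})
    (fun x => by by_cases hx : x ∈ K <;> simp [hx, ht, convex_univ]) fun x => by
      by_cases hx : x ∈ K
      · obtain ⟨k, hk⟩ := mem_iUnion.1 (hKU hx)
        exact ⟨U k, (hU k).mem_nhds hk, g k, contMDiffOn_iff_contDiffOn.2 (hg k).contDiffOn,
          fun y hy hyK => hgt k y ⟨hyK, hy⟩⟩
      · exact ⟨Kᶜ, hK.compl_mem_nhds hx, 0, contMDiffOn_const, fun y hy hyK => absurd hyK hy⟩
  exact ⟨G, contMDiff_iff_contDiff.1 G.contMDiff, fun x hx => hG x hx⟩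

lemma exists_sq_smul_of_pos_coeffs {E F ι V : Type*} [NormedAddCommGroup E] [NormedSpace ℝ E]
    [AddCommMonoid F] [Module ℝ F] [Fintype ι] [DecidableEq V] {K : Set E} (v : ι → V)
    {C : E → ι → ℝ} (hC : ContDiff ℝ ∞ C) (hpos : ∀ x ∈ K, ∀ i, 0 < C x i) :
    ∃ γ : V → E → ℝ, (∀ ξ ∈ Finset.univ.image v, ContDiffOn ℝ ∞ (γ ξ) K) ∧
      ∀ x ∈ K, ∀ g : V → F,
        ∑ ξ ∈ Finset.univ.image v, (γ ξ x) ^ 2 • g ξ = ∑ i, C x i • g (v i) := by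
  have hfiber : ∀ x ∈ K, ∀ ξ ∈ Finset.univ.image v, 0 < ∑ i with v i = ξ, C x i := by
    intro x hx ξ hξ
    obtain ⟨i, -, rfl⟩ := Finset.mem_image.1 hξ
    exact Finset.sum_pos (fun j _ => hpos x hx j) ⟨i, by simp⟩
  refine ⟨fun ξ x => √(∑ i with v i = ξ, C x i), fun ξ hξ x hx => ?_, fun x hx g => ?_⟩
  · exact ((Real.contDiffAt_sqrt (hfiber x hx ξ hξ).ne').comp x
      (ContDiff.sum fun i _ => contDiff_pi.1 hC i).contDiffAt).contDiffWithinAt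
  · rw [← Finset.sum_fiberwise_of_maps_to (g := v) (t := Finset.univ.image v) (by simp)]
    refine Finset.sum_congr rfl fun ξ hξ => ?_
    rw [Real.sq_sqrt (hfiber x hx ξ hξ).le, Finset.sum_smul]
    exact Finset.sum_congr rfl fun i hi => by rw [(Finset.mem_filter.1 hi).2]

lemma exists_pos_coeffs_of_cover {κ τ : Type*} [Fintype κ] {ρ c : ℝ} (hρ : 0 < ρ)
    (hρc : 25 * d * ρ ≤ 12 * c) {K : Set (Matrix (Fin d) (Fin d) ℝ)} (hK : IsClosed K)
    (hsymm : ∀ R ∈ K, R.IsSymm) (u : κ → Fin d → ℝ) (center : τ → Matrix (Fin d) (Fin d) ℝ)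
    (lam : τ → κ → ℝ) (hlam : ∀ k j, 0 ≤ lam k j)
    (happrox : ∀ k, ‖center k - c • 1 - ∑ j, lam k j • vecMulVec (u j) (u j)‖ ≤ ρ / 4)
    (hcover : K ⊆ ⋃ k, ball (center k) (ρ / 2)) :
    ∃ C : Matrix (Fin d) (Fin d) ℝ → BaseIdx d ⊕ κ → ℝ, ContDiff ℝ ∞ C ∧ ∀ R ∈ K,
      (∀ x, 0 < C R x) ∧
        ∑ x, C R x • vecMulVec (Sum.elim baseVec u x) (Sum.elim baseVec u x) = R := by
  set Q := ∑ j, vecMulVec (u j) (u j)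
  set η := ρ / (4 * (‖Q‖ + 1))
  have hη : 0 < η := by positivity
  have hηQ : ‖η • Q‖ ≤ ρ / 4 := by
    rw [norm_smul, Real.norm_of_nonneg hη.le, div_mul_eq_mul_div,
      div_le_div_iff₀ (by positivity) (by norm_num)]
    nlinarith [norm_nonneg Q]
  refine exists_contDiff_forall_mem_of_cover hK
    (fun R _ => convex_setOf_pos_sum_smul_eq _ R) _ (fun _ => isOpen_ball) hcover
    (fun k => patchCoeff ρ u (fun j => η + lam k j)) (fun k => contDiff_patchCoeff u ρ _)
    fun k R ⟨hRK, hRk⟩ => ⟨patchCoeff_pos u hρ hρc (fun j => by linarith [hlam k j]) ?_,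
      sum_patchCoeff_smul_vecMulVec u ρ _ (hsymm R hRK)⟩
  have hsplit : R - ∑ j, (η + lam k j) • vecMulVec (u j) (u j) - c • 1 =
      (R - center k) + (center k - c • 1 - ∑ j, lam k j • vecMulVec (u j) (u j)) - η • Q := by
    simp only [add_smul, Finset.sum_add_distrib, Q, Finset.smul_sum]
    abel
  rw [hsplit]
  calc _ ≤ ‖R - center k‖ + ‖center k - c • 1 - ∑ j, lam k j • vecMulVec (u j) (u j)‖ +
        ‖η • Q‖ := norm_sub_le_of_le (norm_add_le _ _) le_rfl
    _ ≤ ρ / 2 + ρ / 4 + ρ / 4 := by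
        gcongr
        · exact (mem_ball_iff_norm.1 hRk).le
        · exact happrox k
    _ = ρ := by ring

theorem exists_ratSphere_decomposition_of_isCompact [NeZero d]
    {K : Set (Matrix (Fin d) (Fin d) ℝ)} (hK : IsCompact K) {c : ℝ} (hc : 0 < c)
    (hpsd : ∀ R ∈ K, (R - c • 1).PosSemidef) :
    ∃ (Λ : Finset (Fin d → ℝ)) (γ : (Fin d → ℝ) → Matrix (Fin d) (Fin d) ℝ → ℝ),
      (∀ ξ ∈ Λ, ξ ∈ ratSphere d) ∧ (∀ ξ ∈ Λ, ContDiffOn ℝ ∞ (γ ξ) K) ∧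
      ∀ R ∈ K, R = ∑ ξ ∈ Λ, (γ ξ R) ^ 2 • vecMulVec ξ ξ := by
  classical
  have hsymm (R) (hR : R ∈ K) : R.IsSymm := by
    simpa [IsSymm, transpose_sub] using (hpsd R hR).1.eq
  set ρ := 12 * c / (25 * d)
  have hd : (0 : ℝ) < d := by simp [NeZero.pos d]
  have hρ : 0 < ρ := by positivity
  have hρc : 25 * d * ρ ≤ 12 * c := by
    rw [mul_div_assoc', mul_div_cancel_left₀ _ (by positivity)]
  choose! lam w hlam hw happrox using fun R (hR : R ∈ K) =>
    exists_ratSphere_approx_of_posSemidef (hpsd R hR) (ε := ρ / 4) (by positivity)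
  obtain ⟨t, htK, hKt⟩ := hK.elim_nhds_subcover (fun R => ball R (ρ / 2))
    fun R _ => ball_mem_nhds R (by positivity)
  set u : t × Fin d → Fin d → ℝ := fun p => w p.1 p.2
  set v := Sum.elim baseVec u
  obtain ⟨C, hC, hCK⟩ := exists_pos_coeffs_of_cover hρ hρc hK.isClosed hsymm u
    (fun k : t => k.1) (fun k p => if p.1 = k then lam k p.2 else 0)
    (fun k p => by split_ifs <;> simp [hlam, htK])
    (fun k => by
      rw [Fintype.sum_prod_type]
      simpa [u, ite_smul] using (happrox k (htK k k.2)).le)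
    (by simpa [iUnion_subtype] using hKt)
  obtain ⟨γ, hγ, hγC⟩ :=
    exists_sq_smul_of_pos_coeffs (F := Matrix (Fin d) (Fin d) ℝ) v hC fun R hR => (hCK R hR).1
  refine ⟨Finset.univ.image v, γ, ?_, hγ, fun R hR => ?_⟩
  · simp only [Finset.mem_image, Finset.mem_univ, true_and]
    rintro _ ⟨x | p, rfl⟩
    · exact baseVec_mem_ratSphere x
    · exact hw p.1 (htK _ p.1.2) p.2
  · rw [hγC R hR, (hCK R hR).2]

end GeometricLemma

open GeometricLemma

/-- Geometric lemma (De Lellis–Székelyhidi type): there is a finite set `Λ` of rational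
unit vectors in `ℝ^d` and smooth functions `γ_ξ` on the closed Frobenius ball
`B̄_{1/2}(Id)` of symmetric matrices such that
`R = ∑_{ξ ∈ Λ} γ_ξ(R)² (ξ ⊗ ξ)` for every symmetric `R` with `|R − Id| ≤ 1/2`. -/
theorem geometric_lemma (d : ℕ) (hd : 2 ≤ d) :
    ∃ (Λ : Finset (Fin d → ℝ)) (γ : (Fin d → ℝ) → Matrix (Fin d) (Fin d) ℝ → ℝ),
      (∀ ξ ∈ Λ, (∑ i, ξ i ^ 2 = 1) ∧ ∀ i, ∃ q : ℚ, ξ i = (q : ℝ)) ∧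
      (∀ ξ ∈ Λ, ContDiffOn ℝ (⊤ : ℕ∞) (γ ξ)
        {R : Matrix (Fin d) (Fin d) ℝ | R.IsSymm ∧ frobNorm (R - 1) ≤ 1 / 2}) ∧
      (∀ R : Matrix (Fin d) (Fin d) ℝ, R.IsSymm → frobNorm (R - 1) ≤ 1 / 2 →
        R = ∑ ξ ∈ Λ, (γ ξ R) ^ 2 • Matrix.vecMulVec ξ ξ) := by
  have : NeZero d := ⟨by omega⟩
  obtain ⟨Λ, γ, hΛ, hγ, hR⟩ := exists_ratSphere_decomposition_of_isCompact
    (isCompact_setOf_isSymm_frobNorm_sub_one_le (d := d) (1 / 2)) (c := 1 / 2) (by norm_num)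
    fun R hR => by
      convert posSemidef_sub_smul_one_of_frobNorm_sub_one_le hR.1 hR.2 using 3
      norm_num
  exact ⟨Λ, γ, hΛ, hγ, fun R hsymm hfrob => hR R ⟨hsymm, hfrob⟩⟩
end

section
/- Let d ≥ 3 and let Λ be a finite set of pairwise distinct unit vectors in ℝ^d, each having all coordinates rational. Let n be a positive integer. Then there exist points α_ξ ∈ ℝ^d for ξ ∈ Λ and a radius ρ > 0 such that for all ξ, ξ' ∈ Λ with ξ ≠ ξ', the sets (B_ρ(α_ξ) + {s ξ : s ∈ ℝ} + (2π/n)ℤ^d) and (B_ρ(α_{ξ'}) + {s ξ' : s ∈ ℝ} + (2π/n)ℤ^d) are disjoint, where B_ρ(α) is the open Euclidean ball of radius ρ centered at α and the sums are Minkowski sums of subsets of ℝ^d. -/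
/-!
For distinct rational directions `ξ, ξ'` in dimension `d ≥ 3` there is a nonzero integer vector `W`
orthogonal to both. The functional `⟪W, ·⟫` kills both lines and maps the lattice
`(2π/n)ℤ^d` into `(2π/n)ℤ`, so the two thickened periodized lines are disjoint as soon as
`⟪W, α_ξ - α_ξ'⟫ ∉ (2π/n)ℤ` and `ρ` is small. Shifts satisfying this for all pairs at once exist
by the Baire category theorem, since each condition excludes only countably many hyperplanes.
-/

open scoped BigOperators Pointwise

open scoped Matrix

open Filter Topology Metric

theorem AddSubgroup.eventually_disjoint_ball_add {E : Type*} [SeminormedAddCommGroup E]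
    {H : AddSubgroup E} (hH : IsClosed (H : Set E)) {a b : E} (hab : a - b ∉ H) :
    ∀ᶠ ρ in 𝓝 (0 : ℝ), Disjoint (ball a ρ + H) (ball b ρ + H) := by
  obtain ⟨ε, hε, hball⟩ := Metric.isOpen_iff.1 hH.isOpen_compl (a - b) hab
  filter_upwards [Iio_mem_nhds (half_pos hε)] with ρ hρ
  rw [Set.disjoint_left]
  rintro _ ⟨p, hp, h, hh, rfl⟩ ⟨q, hq, h', hh', heq : q + h' = p + h⟩
  have hpq : p - q ∈ H := by
    rw [show p - q = h' - h by rw [sub_eq_sub_iff_add_eq_add, ← heq, add_comm]]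
    exact H.sub_mem hh' hh
  refine hball ?_ hpq
  calc dist (p - q) (a - b) ≤ dist p a + dist q b := dist_sub_sub_le _ _ _ _
    _ < ε := by rw [mem_ball] at hp hq; linarith [hρ.out]

theorem ContinuousLinearMap.eventually_residual_apply_notMem {F : Type*}
    [NormedAddCommGroup F] [NormedSpace ℝ F] [CompleteSpace F] {g : F →L[ℝ] ℝ} (hg : g ≠ 0)
    {S : Set ℝ} (hS : S.Countable) : ∀ᶠ x in residual F, g x ∉ S := by
  have hopen : IsOpenMap g :=
    g.isOpenMap (LinearMap.surjective fun h => hg (ContinuousLinearMap.coe_injective h))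
  have : ∀ᶠ x in residual F, ∀ t ∈ S, g x ≠ t :=
    (eventually_countable_ball hS).2 fun t _ => residual_of_dense_open
      (isClosed_singleton.preimage g.continuous).isOpen_compl
      ((dense_compl_singleton t).preimage hopen)
  exact this.mono fun x hx hxS => hx _ hxS rfl

theorem exists_apply_sub_notMem {ι F : Type*} [NormedAddCommGroup F] [NormedSpace ℝ F]
    [CompleteSpace F] (s : Finset ι) (f : ι → ι → F →L[ℝ] ℝ)
    (hf : ∀ i ∈ s, ∀ j ∈ s, i ≠ j → f i j ≠ 0) {S : Set ℝ} (hS : S.Countable) :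
    ∃ α : ι → F, ∀ i ∈ s, ∀ j ∈ s, i ≠ j → f i j (α i - α j) ∉ S := by
  classical
  let g : s → s → (s → F) →L[ℝ] ℝ := fun i j =>
    (f i j).comp (.proj (R := ℝ) (φ := fun _ : s => F) i - .proj j)
  have hg : ∀ i j : s, i ≠ j → g i j ≠ 0 := by
    intro i j hij hgij
    obtain ⟨v, hv⟩ : ∃ v, f i j v ≠ 0 := by
      by_contra! h
      exact hf _ i.2 _ j.2 (Subtype.coe_ne_coe.2 hij) (ContinuousLinearMap.ext h)
    apply hv
    simpa [g, Pi.single_apply, hij.symm] using congr($hgij (Pi.single i v))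
  have hgood : ∀ᶠ β in residual (s → F), ∀ i j : s, i ≠ j → g i j β ∉ S := by
    simp only [Filter.eventually_all]
    exact fun i j hij => ContinuousLinearMap.eventually_residual_apply_notMem (hg i j hij) hS
  obtain ⟨β, hβ⟩ := (dense_of_mem_residual hgood).nonempty
  refine ⟨fun x => if hx : x ∈ s then β ⟨x, hx⟩ else 0, fun i hi j hj hij => ?_⟩
  simpa [g, hi, hj] using hβ ⟨i, hi⟩ ⟨j, hj⟩ (by simpa using hij)

theorem Matrix.exists_int_vec_ne_zero_mulVec_eq_zero {m n : Type*} [Fintype m] [Fintype n]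
    (A : Matrix m n ℚ) (hmn : Fintype.card m < Fintype.card n) :
    ∃ w : n → ℤ, w ≠ 0 ∧ A *ᵥ (fun i => (w i : ℚ)) = 0 := by
  obtain ⟨v, hv, hv0⟩ := Submodule.exists_mem_ne_zero_of_ne_bot
    (LinearMap.ker_ne_bot_of_finrank_lt (f := A.mulVecLin) (by simpa using hmn))
  obtain ⟨b, hb⟩ := IsLocalization.exist_integer_multiples_of_finite (nonZeroDivisors ℤ) v
  choose w hw using hb
  have hwv : (fun i => (w i : ℚ)) = (b : ℤ) • v := funext hw
  refine ⟨w, fun h => ?_, ?_⟩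
  · refine smul_ne_zero (nonZeroDivisors.coe_ne_zero b) hv0 ?_
    rw [← hwv, h]
    rfl
  · rw [hwv, Matrix.mulVec_smul, show A *ᵥ v = 0 from hv, smul_zero]

theorem EuclideanSpace.exists_int_coords_inner_eq_zero {m d : ℕ} (hmd : m < d)
    (v : Fin m → EuclideanSpace ℝ (Fin d)) (hv : ∀ j i, ∃ q : ℚ, v j i = q) :
    ∃ W : EuclideanSpace ℝ (Fin d), W ≠ 0 ∧ (∀ i, ∃ k : ℤ, W i = k) ∧
      ∀ j, inner ℝ W (v j) = 0 := by
  choose q hq using hv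
  obtain ⟨w, hw0, hw⟩ :=
    (Matrix.of q).exists_int_vec_ne_zero_mulVec_eq_zero (by simpa using hmd)
  refine ⟨WithLp.toLp 2 fun i => (w i : ℝ), fun h => hw0 ?_, fun i => ⟨w i, rfl⟩, fun j => ?_⟩
  · funext i
    simpa using congr($h i)
  · have hj : ∑ i, q j i * w i = 0 := congr_fun hw j
    simp only [PiLp.inner_apply, hq, RCLike.inner_apply, conj_trivial]
    exact_mod_cast hj

theorem EuclideanSpace.inner_mem_zmultiples {d : ℕ} {c : ℝ} {W y : EuclideanSpace ℝ (Fin d)}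
    (hW : ∀ i, ∃ k : ℤ, W i = k) (hy : ∀ i, ∃ k : ℤ, y i = c * k) :
    inner ℝ W y ∈ AddSubgroup.zmultiples c := by
  rw [PiLp.inner_apply]
  refine sum_mem fun i _ => ?_
  obtain ⟨k, hk⟩ := hW i
  obtain ⟨l, hl⟩ := hy i
  exact AddSubgroup.mem_zmultiples_iff.2 ⟨l * k, by simp [hk, hl]; ring⟩

theorem EuclideanSpace.eventually_disjoint_ball_add_line_add_lattice {d : ℕ} {c : ℝ}
    {W ξ ξ' a a' : EuclideanSpace ℝ (Fin d)} (hW : ∀ i, ∃ k : ℤ, W i = k)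
    (hξ : inner ℝ W ξ = 0) (hξ' : inner ℝ W ξ' = 0)
    (ha : inner ℝ W (a - a') ∉ AddSubgroup.zmultiples c) :
    ∀ᶠ ρ in 𝓝 (0 : ℝ),
      Disjoint
        (ball a ρ + {y | ∃ s : ℝ, y = s • ξ} + {y | ∀ i, ∃ k : ℤ, y i = c * k})
        (ball a' ρ + {y | ∃ s : ℝ, y = s • ξ'} + {y | ∀ i, ∃ k : ℤ, y i = c * k}) := by
  let H := (AddSubgroup.zmultiples c).comap (innerSL ℝ W).toLinearMap.toAddMonoidHom
  have hH : IsClosed (H : Set (EuclideanSpace ℝ (Fin d))) :=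
    (AddSubgroup.isClosed_of_discrete (H := .zmultiples c)).preimage (innerSL ℝ W).continuous
  have hsub : ∀ {η}, inner ℝ W η = 0 →
      {y | ∃ s : ℝ, y = s • η} + {y | ∀ i, ∃ k : ℤ, y i = c * k} ⊆ (H : Set _) := by
    intro η hη
    rw [Set.add_subset_iff]
    rintro _ ⟨s, rfl⟩ y hy
    show inner ℝ W (s • η + y) ∈ AddSubgroup.zmultiples c
    rw [inner_add_right, inner_smul_right, hη, mul_zero, zero_add]
    exact inner_mem_zmultiples hW hy
  refine (AddSubgroup.eventually_disjoint_ball_add hH ha).mono fun ρ h => ?_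
  rw [add_assoc, add_assoc]
  exact h.mono (Set.add_subset_add_left (hsub hξ)) (Set.add_subset_add_left (hsub hξ'))

theorem disjoint_supports_lemma_general (d : ℕ) (hd : 3 ≤ d)
    (Λ : Finset (EuclideanSpace ℝ (Fin d)))
    (hΛ : ∀ ξ ∈ Λ, ‖ξ‖ = 1 ∧ ∀ i, ∃ q : ℚ, ξ i = (q : ℝ))
    (n : ℕ) :
    ∃ (α : EuclideanSpace ℝ (Fin d) → EuclideanSpace ℝ (Fin d)) (ρ : ℝ), 0 < ρ ∧
      ∀ ξ ∈ Λ, ∀ ξ' ∈ Λ, ξ ≠ ξ' →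
        Disjoint
          (Metric.ball (α ξ) ρ + {y : EuclideanSpace ℝ (Fin d) | ∃ s : ℝ, y = s • ξ}
            + {y : EuclideanSpace ℝ (Fin d) | ∀ i, ∃ k : ℤ, y i = 2 * Real.pi / n * k})
          (Metric.ball (α ξ') ρ + {y : EuclideanSpace ℝ (Fin d) | ∃ s : ℝ, y = s • ξ'}
            + {y : EuclideanSpace ℝ (Fin d) | ∀ i, ∃ k : ℤ, y i = 2 * Real.pi / n * k}) := by
  have hW : ∀ ξ ∈ Λ, ∀ ξ' ∈ Λ, ∃ W : EuclideanSpace ℝ (Fin d), W ≠ 0 ∧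
      (∀ i, ∃ k : ℤ, W i = k) ∧ ∀ j, inner ℝ W (![ξ, ξ'] j) = 0 := fun ξ hξ ξ' hξ' =>
    EuclideanSpace.exists_int_coords_inner_eq_zero (by omega) _ fun j => by
      fin_cases j
      exacts [(hΛ ξ hξ).2, (hΛ ξ' hξ').2]
  choose! W hW0 hWint hWξ using hW
  obtain ⟨α, hα⟩ := exists_apply_sub_notMem Λ (fun ξ ξ' => innerSL ℝ (W ξ ξ'))
    (fun ξ hξ ξ' hξ' _ => by simpa [← norm_ne_zero_iff, -ne_eq] using hW0 ξ hξ ξ' hξ')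
    (S := AddSubgroup.zmultiples (2 * Real.pi / n))
    (by rw [AddSubgroup.coe_zmultiples]; exact Set.countable_range _)
  have hdisj := (eventually_all_finset Λ).2 fun ξ hξ => (eventually_all_finset Λ).2 fun ξ' hξ' =>
    eventually_imp_distrib_left.2 fun hne =>
      EuclideanSpace.eventually_disjoint_ball_add_line_add_lattice (hWint ξ hξ ξ' hξ')
        (hWξ ξ hξ ξ' hξ' 0) (hWξ ξ hξ ξ' hξ' 1) (hα ξ hξ ξ' hξ' hne)
  obtain ⟨ρ, hρ, hρ0⟩ :=
    ((hdisj.filter_mono nhdsWithin_le_nhds).and (self_mem_nhdsWithin (s := Set.Ioi 0))).exists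
  exact ⟨α, ρ, hρ0, hρ⟩

/-- Disjoint-supports lemma for the intermittent jets: for a finite set of distinct
rational unit directions `ξ` in `ℝ^d` (`d ≥ 3`) and a lattice spacing `2π/n`, there
are shifts `α_ξ` and a radius `ρ > 0` such that the thickened periodized lines
`B_ρ(α_ξ) + ℝξ + (2π/n)ℤ^d` associated to distinct directions are disjoint. -/
theorem disjoint_supports_lemma (d : ℕ) (hd : 3 ≤ d)
    (Λ : Finset (EuclideanSpace ℝ (Fin d)))
    (hΛ : ∀ ξ ∈ Λ, ‖ξ‖ = 1 ∧ ∀ i, ∃ q : ℚ, ξ i = (q : ℝ))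
    (n : ℕ) (hn : 0 < n) :
    ∃ (α : EuclideanSpace ℝ (Fin d) → EuclideanSpace ℝ (Fin d)) (ρ : ℝ), 0 < ρ ∧
      ∀ ξ ∈ Λ, ∀ ξ' ∈ Λ, ξ ≠ ξ' →
        Disjoint
          (Metric.ball (α ξ) ρ + {y : EuclideanSpace ℝ (Fin d) | ∃ s : ℝ, y = s • ξ}
            + {y : EuclideanSpace ℝ (Fin d) | ∀ i, ∃ k : ℤ, y i = 2 * Real.pi / n * k})
          (Metric.ball (α ξ') ρ + {y : EuclideanSpace ℝ (Fin d) | ∃ s : ℝ, y = s • ξ'}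
            + {y : EuclideanSpace ℝ (Fin d) | ∀ i, ∃ k : ℤ, y i = 2 * Real.pi / n * k}) :=
  disjoint_supports_lemma_general d hd Λ hΛ n
end

section
/- Let d ≥ 1, let ξ ∈ ℝ^d be a unit vector, let μ ∈ ℝ with μ ≠ 0, let g : ℝ → ℝ be smooth, and let h : ℝ^d → ℝ be smooth with ∇h(x)·ξ = 0 for every x ∈ ℝ^d. Define W : ℝ × ℝ^d → ℝ^d by W(t,x) = g(x·ξ + μt) h(x) ξ. Then for every (t,x) and every index i, Σ_{j=1}^d ∂_{x_j}(W_i W_j)(t,x) = μ^{−1} ∂_t [ g(x·ξ + μt)² h(x)² ] ξ_i; that is, div_x(W ⊗ W) = μ^{−1} ∂_t ( g(·ξ + μ·)² h² ξ ). -/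
/-!
Writing `F(t, y) = g(y·ξ + μt)² h(y)²`, every entry of `W ⊗ W` is `ξ_i ξ_j F`, so the `i`-th
component of `div (W ⊗ W)` is `ξ_i ∂_ξ F`. Since `∂_ξ h = 0` and `ξ·ξ = 1`, the profile `F` is
transported along `ξ`: `∂_ξ F = (g²)'(x·ξ + μt) h(x)² = μ⁻¹ ∂_t F`.
-/

open scoped BigOperators

theorem ContinuousLinearMap.sum_smul_apply_single {ι R M : Type*} [Fintype ι] [DecidableEq ι]
    [Semiring R] [TopologicalSpace R] [AddCommMonoid M] [TopologicalSpace M] [Module R M]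
    (L : (ι → R) →L[R] M) (v : ι → R) :
    ∑ j, v j • L (Pi.single j 1) = L v := by
  conv_rhs => rw [← Finset.univ_sum_single v]
  rw [map_sum]
  refine Finset.sum_congr rfl fun j _ => ?_
  rw [← map_smul, ← Pi.single_smul', smul_eq_mul, mul_one]

theorem sum_fderiv_const_mul_apply_single {𝕜 ι : Type*} [NontriviallyNormedField 𝕜] [Fintype ι]
    [DecidableEq ι] {F : (ι → 𝕜) → 𝕜} {x : ι → 𝕜} (hF : DifferentiableAt 𝕜 F x)
    (ξ : ι → 𝕜) (i : ι) :
    ∑ j, fderiv 𝕜 (fun y => ξ i * ξ j * F y) x (Pi.single j 1) = ξ i * fderiv 𝕜 F x ξ := by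
  rw [← (fderiv 𝕜 F x).sum_smul_apply_single ξ, Finset.mul_sum]
  refine Finset.sum_congr rfl fun j _ => ?_
  rw [fderiv_const_mul hF, smul_apply, smul_eq_mul, smul_eq_mul, mul_assoc]

section Transport

variable {E : Type*} [NormedAddCommGroup E] [NormedSpace ℝ E]
  {G : ℝ → ℝ} {H : E → ℝ} {ℓ : E →L[ℝ] ℝ} {ξ x : E} {a c μ t : ℝ}

theorem fderiv_comp_add_const_mul_apply (hG : DifferentiableAt ℝ G (ℓ x + c))
    (hH : DifferentiableAt ℝ H x) (hℓ : ℓ ξ = 1) (hHξ : fderiv ℝ H x ξ = 0) :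
    fderiv ℝ (fun y => G (ℓ y + c) * H y) x ξ = deriv G (ℓ x + c) * H x := by
  have hGℓ : HasFDerivAt (fun y => G (ℓ y + c)) (deriv G (ℓ x + c) • ℓ) x :=
    hG.hasDerivAt.comp_hasFDerivAt x (ℓ.hasFDerivAt.add_const c)
  rw [(hGℓ.fun_mul hH.hasFDerivAt).fderiv]
  simp [hℓ, hHξ, mul_comm]

theorem deriv_comp_const_add_mul_mul (hG : DifferentiableAt ℝ G (a + μ * t)) (b : ℝ) :
    deriv (fun s => G (a + μ * s) * b) t = μ * deriv G (a + μ * t) * b := by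
  have hlin : HasDerivAt (fun s => a + μ * s) μ t := by
    simpa using ((hasDerivAt_id t).const_mul μ).const_add a
  have hGlin : HasDerivAt (fun s => G (a + μ * s)) (deriv G (a + μ * t) * μ) t :=
    hG.hasDerivAt.comp t hlin
  rw [(hGlin.mul_const b).deriv]
  ring

theorem fderiv_apply_eq_inv_mul_deriv (hμ : μ ≠ 0) (hG : DifferentiableAt ℝ G (ℓ x + μ * t))
    (hH : DifferentiableAt ℝ H x) (hℓ : ℓ ξ = 1) (hHξ : fderiv ℝ H x ξ = 0) :
    fderiv ℝ (fun y => G (ℓ y + μ * t) * H y) x ξ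
      = μ⁻¹ * deriv (fun s => G (ℓ x + μ * s) * H x) t := by
  rw [fderiv_comp_add_const_mul_apply hG hH hℓ hHξ, deriv_comp_const_add_mul_mul hG,
    ← mul_assoc, ← mul_assoc, inv_mul_cancel₀ hμ, one_mul]

end Transport

theorem jet_div_eq_time_deriv_general (d : ℕ)
    (ξ : Fin d → ℝ) (hξ : ∑ i, ξ i ^ 2 = 1)
    (μ : ℝ) (hμ : μ ≠ 0)
    (g : ℝ → ℝ) (hg : ContDiff ℝ (⊤ : ℕ∞) g)
    (h : (Fin d → ℝ) → ℝ) (hh : ContDiff ℝ (⊤ : ℕ∞) h)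
    (hperp : ∀ x : Fin d → ℝ, fderiv ℝ h x ξ = 0)
    (W : ℝ → (Fin d → ℝ) → Fin d → ℝ)
    (hW : ∀ t x i, W t x i = g ((∑ k, x k * ξ k) + μ * t) * h x * ξ i) :
    ∀ (t : ℝ) (x : Fin d → ℝ) (i : Fin d),
      ∑ j, fderiv ℝ (fun y => W t y i * W t y j) x (Pi.single j 1)
        = μ⁻¹ * deriv (fun s => g ((∑ k, x k * ξ k) + μ * s) ^ 2 * h x ^ 2) t * ξ i := by
  intro t x i
  let ℓ : (Fin d → ℝ) →L[ℝ] ℝ :=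
    LinearMap.toContinuousLinearMap ((dotProductBilin ℝ ℝ).flip ξ)
  have hℓ : ∀ y, ℓ y = ∑ k, y k * ξ k := fun y => rfl
  have hg' : Differentiable ℝ g := hg.differentiable (by simp)
  have hh' : Differentiable ℝ h := hh.differentiable (by simp)
  have hWW : ∀ j, (fun y => W t y i * W t y j)
      = fun y => ξ i * ξ j * (g (ℓ y + μ * t) ^ 2 * h y ^ 2) := by
    intro j
    funext y
    rw [hW, hW, hℓ]
    ring
  simp only [hWW]
  rw [sum_fderiv_const_mul_apply_single (by fun_prop), ← hℓ x,
    fderiv_apply_eq_inv_mul_deriv (G := fun z => g z ^ 2) (H := fun y => h y ^ 2) hμ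
      (by fun_prop) (by fun_prop)]
  · ring
  · simpa [hℓ, sq] using hξ
  · simp [fderiv_fun_pow 2 (hh' x), hperp]

/-- The self-interaction of an intermittent jet is a time derivative:
for `W(t,x) = g(x·ξ + μt) h(x) ξ` with `ξ` a unit vector, `g, h` smooth and
`∇h · ξ = 0`, one has `div_x (W ⊗ W) = μ⁻¹ ∂_t (g(x·ξ + μt)² h(x)² ξ)`. -/
theorem jet_div_eq_time_deriv (d : ℕ) (hd : 1 ≤ d)
    (ξ : Fin d → ℝ) (hξ : ∑ i, ξ i ^ 2 = 1)
    (μ : ℝ) (hμ : μ ≠ 0)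
    (g : ℝ → ℝ) (hg : ContDiff ℝ (⊤ : ℕ∞) g)
    (h : (Fin d → ℝ) → ℝ) (hh : ContDiff ℝ (⊤ : ℕ∞) h)
    (hperp : ∀ x : Fin d → ℝ, fderiv ℝ h x ξ = 0)
    (W : ℝ → (Fin d → ℝ) → Fin d → ℝ)
    (hW : ∀ t x i, W t x i = g ((∑ k, x k * ξ k) + μ * t) * h x * ξ i) :
    ∀ (t : ℝ) (x : Fin d → ℝ) (i : Fin d),
      ∑ j, fderiv ℝ (fun y => W t y i * W t y j) x (Pi.single j 1)
        = μ⁻¹ * deriv (fun s => g ((∑ k, x k * ξ k) + μ * s) ^ 2 * h x ^ 2) t * ξ i :=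
  jet_div_eq_time_deriv_general d ξ hξ μ hμ g hg h hh hperp W hW
end
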